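/- For every 1 ≤ p < ∞ there exists a continuous linear operator T on X = Lp([0,1]; ℝ) (with Lebesgue measure) that is semi band preserving but not semi containment preserving; that is, for all f, g ∈ X, supp f ∩ supp(Tg) null implies supp(Tf) ∩ supp(Tg) null, yet there exist f, g ∈ X with supp f ⊆ supp(Tg) up to a null set and supp(Tf) not contained in supp(Tg) up to a null set. -/

import Mathlib

/-!
Take `T f = (∫_{(0,1/4)} f) · 1 + (∫_{(1/4,1/2)} f) · min x (1/2)`. Every non-zero function
`a + b · min x (1/2)` in the range of `T` is a.e. non-zero on `[0,1/2)`, and both functionals only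
see `[0,1/2)`. So if `f` is disjoint from the support of some `T g ≠ 0`, then `f` vanishes on
`[0,1/2)` and `T f = 0`: `T` is semi band preserving. On the other hand, for
`g = 1_{(0,1/4)} - 2 · 1_{(1/4,1/2)}` we get `T g = 1/4 - min x (1/2) / 2`, whose support is
`[0,1/2)` and contains that of `f = 1_{(0,1/4)}`, while `T f = 1/4` does not vanish on `[1/2,1]`.
-/

open MeasureTheory
open scoped ENNReal

noncomputable def μ01 : Measure ℝ := volume.restrict (Set.Icc (0 : ℝ) 1)

open Set Function

section SemiBandPreserving

variable {α E : Type*} [MeasurableSpace α] {μ : Measure α} [NormedAddCommGroup E]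
  [NormedSpace ℝ E] {p : ℝ≥0∞} [Fact (1 ≤ p)]

def IsSemiBandPreserving (T : Lp E p μ →L[ℝ] Lp E p μ) : Prop :=
  ∀ f g : Lp E p μ, μ (support f ∩ support (T g)) = 0 → μ (support (T f) ∩ support (T g)) = 0

omit [NormedSpace ℝ E] [Fact (1 ≤ p)] in
lemma MeasureTheory.Lp.measure_support_zero : μ (support ⇑(0 : Lp E p μ)) = 0 :=
  Lp.coeFn_zero E p μ

lemma isSemiBandPreserving_of_ae_ne_zero {T : Lp E p μ →L[ℝ] Lp E p μ} (A : Set α)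
    (hker : ∀ f : Lp E p μ, f =ᵐ[μ.restrict A] 0 → T f = 0)
    (hrange : ∀ g : Lp E p μ, T g ≠ 0 → ∀ᵐ x ∂μ.restrict A, T g x ≠ 0) :
    IsSemiBandPreserving T := by
  intro f g hfg
  by_cases hg : T g = 0
  · rw [hg]
    exact measure_mono_null inter_subset_right Lp.measure_support_zero
  · have hf : f =ᵐ[μ.restrict A] 0 := by
      filter_upwards [hrange g hg, ae_restrict_of_ae (measure_eq_zero_iff_ae_notMem.1 hfg)]
        with x hTg hx
      by_contra hfx
      exact hx ⟨hfx, hTg⟩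
    rw [hker f hf]
    exact measure_mono_null inter_subset_left Lp.measure_support_zero

lemma smulRight_add_smulRight_ae_eq (φ ψ : Lp E p μ →L[ℝ] ℝ) (u v f : Lp E p μ) :
    (φ.smulRight u + ψ.smulRight v) f =ᵐ[μ] fun x => φ f • u x + ψ f • v x := by
  rw [add_apply, ContinuousLinearMap.smulRight_apply,
    ContinuousLinearMap.smulRight_apply]
  filter_upwards [Lp.coeFn_add (φ f • u) (ψ f • v), Lp.coeFn_smul (φ f) u,
    Lp.coeFn_smul (ψ f) v] with x hadd hu hv
  rw [hadd, Pi.add_apply, hu, hv]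
  rfl

lemma smulRight_add_smulRight_ae_ne_zero {φ ψ : Lp E p μ →L[ℝ] ℝ} {u v : Lp E p μ}
    {A : Set α} (huv : ∀ a b : ℝ, (a, b) ≠ 0 → ∀ᵐ x ∂μ.restrict A, a • u x + b • v x ≠ 0)
    {g : Lp E p μ} (hg : (φ g, ψ g) ≠ 0) :
    ∀ᵐ x ∂μ.restrict A, (φ.smulRight u + ψ.smulRight v) g x ≠ 0 := by
  filter_upwards [huv _ _ hg, ae_restrict_of_ae (smulRight_add_smulRight_ae_eq φ ψ u v g)]
    with x hne heq
  rwa [heq]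

lemma isSemiBandPreserving_smulRight_add_smulRight {φ ψ : Lp E p μ →L[ℝ] ℝ}
    {u v : Lp E p μ} (A : Set α)
    (hφ : ∀ f : Lp E p μ, f =ᵐ[μ.restrict A] 0 → φ f = 0)
    (hψ : ∀ f : Lp E p μ, f =ᵐ[μ.restrict A] 0 → ψ f = 0)
    (huv : ∀ a b : ℝ, (a, b) ≠ 0 → ∀ᵐ x ∂μ.restrict A, a • u x + b • v x ≠ 0) :
    IsSemiBandPreserving (φ.smulRight u + ψ.smulRight v) := by
  refine isSemiBandPreserving_of_ae_ne_zero A (fun f hf => ?_) (fun g hg => ?_)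
  · simp [hφ f hf, hψ f hf]
  · refine smulRight_add_smulRight_ae_ne_zero huv fun h => hg ?_
    rw [Prod.mk_eq_zero] at h
    simp [h.1, h.2]

end SemiBandPreserving

section SetIntegral

variable {α : Type*} [MeasurableSpace α] {μ : Measure α} {p : ℝ≥0∞} [Fact (1 ≤ p)]
  {s : Set α}

variable (p) in
noncomputable def setIntegralCLM (hs : MeasurableSet s) (hμs : μ s ≠ ∞) : Lp ℝ p μ →L[ℝ] ℝ :=
  haveI : Fact (1 ≤ p.conjExponent) := ⟨ENNReal.HolderConjugate.one_le _ p⟩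
  ((ContinuousLinearMap.mul ℝ ℝ).lpPairing μ p p.conjExponent).flip
    (indicatorConstLp _ hs hμs 1)

lemma setIntegralCLM_apply (hs : MeasurableSet s) (hμs : μ s ≠ ∞) (f : Lp ℝ p μ) :
    setIntegralCLM p hs hμs f = ∫ x in s, f x ∂μ := by
  have : Fact (1 ≤ p.conjExponent) := ⟨ENNReal.HolderConjugate.one_le _ p⟩
  rw [setIntegralCLM, ContinuousLinearMap.flip_apply,
    ContinuousLinearMap.lpPairing_eq_integral, ← integral_indicator hs]
  refine integral_congr_ae ?_
  filter_upwards [indicatorConstLp_coeFn (p := p.conjExponent) (hs := hs) (hμs := hμs)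
    (c := (1 : ℝ))] with x hx
  rw [hx]
  by_cases hxs : x ∈ s <;> simp [hxs]

end SetIntegral

section Support

variable {α E : Type*} [MeasurableSpace α] {μ : Measure α} [NormedAddCommGroup E]

lemma support_indicatorConstLp_ae_le (p : ℝ≥0∞) {s : Set α} (hs : MeasurableSet s)
    (hμs : μ s ≠ ∞) (c : E) : support (indicatorConstLp p hs hμs c) ≤ᵐ[μ] s := by
  filter_upwards [indicatorConstLp_coeFn (p := p) (hs := hs) (hμs := hμs) (c := c)]
    with x hx hfx
  by_contra hxs
  exact hfx (by rw [hx, indicator_of_notMem hxs])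

lemma not_support_ae_le_support {f g : α → E} {B : Set α} (hB : μ B ≠ 0)
    (hf : ∀ᵐ x ∂μ.restrict B, f x ≠ 0) (hg : ∀ᵐ x ∂μ.restrict B, g x = 0) :
    ¬ support f ≤ᵐ[μ] support g := by
  intro hfg
  have : ∀ᵐ x ∂μ.restrict B, False := by
    filter_upwards [hf, hg, ae_restrict_of_ae hfg] with x hfx hgx hx
    exact hx hfx hgx
  exact hB (by simpa using this)

end Support

lemma ae_add_mul_ne_zero {a b : ℝ} (h : (a, b) ≠ 0) : ∀ᵐ x ∂volume, a + b * x ≠ 0 := by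
  rcases eq_or_ne b 0 with rfl | hb
  · exact .of_forall fun x => by simpa using h
  · refine measure_mono_null (fun x hx => ?_) (Real.volume_singleton (a := -a / b))
    replace hx : a + b * x = 0 := by simpa using hx
    rw [mem_singleton_iff, eq_div_iff hb]
    linarith

section UnitInterval

instance : IsFiniteMeasure μ01 := by
  unfold μ01
  infer_instance

lemma μ01_real_Ioo {a b : ℝ} (ha : 0 ≤ a) (hab : a ≤ b) (hb : b ≤ 1) :
    μ01.real (Ioo a b) = b - a := by
  rw [measureReal_def, μ01, Measure.restrict_eq_self _ (Ioo_subset_Icc_self.trans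
    (Icc_subset_Icc ha hb)), Real.volume_Ioo, ENNReal.toReal_ofReal (by linarith)]

lemma μ01_Icc_ne_zero {a b : ℝ} (ha : 0 ≤ a) (hab : a < b) (hb : b ≤ 1) : μ01 (Icc a b) ≠ 0 := by
  rw [μ01, Measure.restrict_eq_self _ (Icc_subset_Icc ha hb), Real.volume_Icc]
  simpa using hab

variable (p : ℝ≥0∞)

lemma memLp_min_half : MemLp (fun x : ℝ => min x (1 / 2)) p μ01 :=
  MonotoneOn.memLp_isCompact isCompact_Icc ((monotone_id.min monotone_const).monotoneOn _)

noncomputable def minHalfLp : Lp ℝ p μ01 :=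
  (memLp_min_half p).toLp _

noncomputable def indicatorIooLp (a b : ℝ) : Lp ℝ p μ01 :=
  indicatorConstLp p measurableSet_Ioo (measure_ne_top μ01 (Ioo a b)) 1

lemma ae_smul_one_add_smul_minHalfLp_ne_zero {a b : ℝ} (hab : (a, b) ≠ 0) :
    ∀ᵐ x ∂μ01.restrict (Iio (1 / 2)), a • Lp.const p μ01 (1 : ℝ) x + b • minHalfLp p x ≠ 0 := by
  filter_upwards [ae_restrict_of_ae (Lp.coeFn_const (p := p) (μ := μ01) (1 : ℝ)),
    ae_restrict_of_ae (memLp_min_half p).coeFn_toLp, ae_restrict_mem measurableSet_Iio,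
    ae_restrict_of_ae (ae_restrict_of_ae (ae_add_mul_ne_zero hab) : ∀ᵐ x ∂μ01, _)]
    with x h1 hmin hx hne
  rw [minHalfLp, hmin, h1, min_eq_left hx.le]
  simpa using hne

variable [Fact (1 ≤ p)]

noncomputable def intervalIntegralCLM (a b : ℝ) : Lp ℝ p μ01 →L[ℝ] ℝ :=
  setIntegralCLM p (s := Ioo a b) measurableSet_Ioo (measure_ne_top μ01 _)

noncomputable def sbpOperator : Lp ℝ p μ01 →L[ℝ] Lp ℝ p μ01 :=
  (intervalIntegralCLM p 0 (1 / 4)).smulRight (Lp.const p μ01 1) +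
    (intervalIntegralCLM p (1 / 4) (1 / 2)).smulRight (minHalfLp p)

lemma sbpOperator_ae_eq (f : Lp ℝ p μ01) :
    sbpOperator p f =ᵐ[μ01] fun x =>
      intervalIntegralCLM p 0 (1 / 4) f +
        intervalIntegralCLM p (1 / 4) (1 / 2) f * min x (1 / 2) := by
  filter_upwards [smulRight_add_smulRight_ae_eq _ _ _ _ f,
    Lp.coeFn_const (p := p) (μ := μ01) (1 : ℝ), (memLp_min_half p).coeFn_toLp] with x hT h1 hmin
  rw [sbpOperator, hT, minHalfLp, hmin, h1]
  simp

lemma intervalIntegralCLM_eq_zero {a b : ℝ} {A : Set ℝ} (hA : Ioo a b ⊆ A) {f : Lp ℝ p μ01}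
    (hf : f =ᵐ[μ01.restrict A] 0) : intervalIntegralCLM p a b f = 0 := by
  rw [intervalIntegralCLM, setIntegralCLM_apply]
  exact integral_eq_zero_of_ae (ae_restrict_of_ae_restrict_of_subset hA hf)

lemma isSemiBandPreserving_sbpOperator : IsSemiBandPreserving (sbpOperator p) :=
  isSemiBandPreserving_smulRight_add_smulRight (Iio (1 / 2))
    (fun _ => intervalIntegralCLM_eq_zero p
      (Ioo_subset_Iio_self.trans (Iio_subset_Iio (by norm_num))))
    (fun _ => intervalIntegralCLM_eq_zero p Ioo_subset_Iio_self)
    fun _ _ => ae_smul_one_add_smul_minHalfLp_ne_zero p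

lemma sbpOperator_ae_ne_zero {g : Lp ℝ p μ01}
    (hg : (intervalIntegralCLM p 0 (1 / 4) g, intervalIntegralCLM p (1 / 4) (1 / 2) g) ≠ 0) :
    ∀ᵐ x ∂μ01.restrict (Iio (1 / 2)), sbpOperator p g x ≠ 0 :=
  smulRight_add_smulRight_ae_ne_zero (fun _ _ => ae_smul_one_add_smul_minHalfLp_ne_zero p) hg

lemma intervalIntegralCLM_indicatorIooLp (a b c d : ℝ) :
    intervalIntegralCLM p a b (indicatorIooLp p c d) = μ01.real (Ioo c d ∩ Ioo a b) := by
  rw [intervalIntegralCLM, setIntegralCLM_apply, indicatorIooLp,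
    setIntegral_indicatorConstLp measurableSet_Ioo, smul_eq_mul, mul_one]

lemma intervalIntegralCLM_indicatorIooLp_self {a b : ℝ} (ha : 0 ≤ a) (hab : a ≤ b) (hb : b ≤ 1) :
    intervalIntegralCLM p a b (indicatorIooLp p a b) = b - a := by
  rw [intervalIntegralCLM_indicatorIooLp, inter_self, μ01_real_Ioo ha hab hb]

lemma intervalIntegralCLM_indicatorIooLp_of_disjoint {a b c d : ℝ}
    (h : Disjoint (Ioo c d) (Ioo a b)) : intervalIntegralCLM p a b (indicatorIooLp p c d) = 0 := by
  rw [intervalIntegralCLM_indicatorIooLp, h.inter_eq, measureReal_empty]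

lemma sbpOperator_indicatorIooLp_ae_eq :
    sbpOperator p (indicatorIooLp p 0 (1 / 4)) =ᵐ[μ01] fun _ => 1 / 4 := by
  filter_upwards [sbpOperator_ae_eq p (indicatorIooLp p 0 (1 / 4))] with x hx
  norm_num [hx, intervalIntegralCLM_indicatorIooLp_self,
    intervalIntegralCLM_indicatorIooLp_of_disjoint]

noncomputable def sbpWitness : Lp ℝ p μ01 :=
  indicatorIooLp p 0 (1 / 4) - (2 : ℝ) • indicatorIooLp p (1 / 4) (1 / 2)

lemma intervalIntegralCLM_sbpWitness :
    (intervalIntegralCLM p 0 (1 / 4) (sbpWitness p),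
      intervalIntegralCLM p (1 / 4) (1 / 2) (sbpWitness p)) = (1 / 4, -(1 / 2)) := by
  norm_num [sbpWitness, intervalIntegralCLM_indicatorIooLp_self,
    intervalIntegralCLM_indicatorIooLp_of_disjoint]

lemma support_indicatorIooLp_ae_le_support_sbpOperator_sbpWitness :
    support (indicatorIooLp p 0 (1 / 4)) ≤ᵐ[μ01] support (sbpOperator p (sbpWitness p)) := by
  have hne := sbpOperator_ae_ne_zero p (g := sbpWitness p)
    (by rw [intervalIntegralCLM_sbpWitness]; norm_num)
  refine (support_indicatorConstLp_ae_le p _ _ 1).trans ?_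
  exact (Ioo_subset_Iio_self.trans (Iio_subset_Iio (by norm_num))).eventuallyLE.trans
    ((ae_restrict_iff' measurableSet_Iio).1 hne)

lemma sbpOperator_sbpWitness_ae_eq_zero :
    ∀ᵐ x ∂μ01.restrict (Icc (1 / 2) 1), sbpOperator p (sbpWitness p) x = 0 := by
  obtain ⟨hφ, hψ⟩ := Prod.mk.inj (intervalIntegralCLM_sbpWitness p)
  filter_upwards [ae_restrict_of_ae (sbpOperator_ae_eq p (sbpWitness p)),
    ae_restrict_mem measurableSet_Icc] with x hx hxB
  rw [hx, hφ, hψ, min_eq_right hxB.1]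
  norm_num

end UnitInterval

theorem exists_sbp_not_scp_general
    (p : ℝ≥0∞) [Fact (1 ≤ p)] :
    ∃ T : Lp ℝ p μ01 →L[ℝ] Lp ℝ p μ01,
      (∀ f g : Lp ℝ p μ01,
        μ01 (Function.support ⇑f ∩ Function.support ⇑(T g)) = 0 →
        μ01 (Function.support ⇑(T f) ∩ Function.support ⇑(T g)) = 0) ∧
      ∃ f g : Lp ℝ p μ01,
        Function.support ⇑f ≤ᵐ[μ01] (Function.support ⇑(T g) : Set ℝ) ∧
        ¬ (Function.support ⇑(T f) ≤ᵐ[μ01] (Function.support ⇑(T g) : Set ℝ)) := by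
  refine ⟨sbpOperator p, isSemiBandPreserving_sbpOperator p, indicatorIooLp p 0 (1 / 4),
    sbpWitness p, support_indicatorIooLp_ae_le_support_sbpOperator_sbpWitness p, ?_⟩
  refine not_support_ae_le_support (μ01_Icc_ne_zero (by norm_num) (by norm_num) le_rfl) ?_
    (sbpOperator_sbpWitness_ae_eq_zero p)
  filter_upwards [ae_restrict_of_ae (sbpOperator_indicatorIooLp_ae_eq p)] with x hx
  norm_num [hx]

/-- For every `1 ≤ p < ∞` there is a continuous linear operator on
`Lp([0,1]; ℝ)` which is semi band preserving but not semi containment preserving. -/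
theorem exists_sbp_not_scp
    (p : ℝ≥0∞) [Fact (1 ≤ p)] (hp : p ≠ ⊤) :
    ∃ T : Lp ℝ p μ01 →L[ℝ] Lp ℝ p μ01,
      (∀ f g : Lp ℝ p μ01,
        μ01 (Function.support ⇑f ∩ Function.support ⇑(T g)) = 0 →
        μ01 (Function.support ⇑(T f) ∩ Function.support ⇑(T g)) = 0) ∧
      ∃ f g : Lp ℝ p μ01,
        Function.support ⇑f ≤ᵐ[μ01] (Function.support ⇑(T g) : Set ℝ) ∧
        ¬ (Function.support ⇑(T f) ≤ᵐ[μ01] (Function.support ⇑(T g) : Set ℝ)) :=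
  exists_sbp_not_scp_general p
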